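/- arXiv:2605.17930 — 2 statements merged into one kernel-verified Lean document; each statement's English description precedes it below -/
import Mathlib

section
/- Fix integers m ≥ 1, n ≥ 1 and real ε with 0 < ε < 1/(64m). Set Δ = 4ε, N = ⌊1/(16mε)⌋, and η = 4m·N^{-m/(n+1)}. If N is large enough that (N^{m/(n+1)}/4 + 1)^{n+1} < N^m, then for any functions a : [0,1] → [0,1]^n and b : [0,1] → (0,1], among the N^m grid sequences z ∈ G₁ × ⋯ × G_m (where G_j = {(j-1)/(2m) + qΔ : q = 1,…,N}) there exist two distinct sequences z ≠ z' with ‖∑_j a(z_j) - ∑_j a(z'_j)‖_∞ ≤ η and |∑_j b(z_j) - ∑_j b(z'_j)| ≤ η. -/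
/-!
Sort the `N^m` grid sequences by the cube of side `η` containing their vector of sums
`(∑ a(z_j), ∑ b(z_j)) ∈ [0, m]^{n+1}`. With `η = 4m N^{-m/(n+1)}` there are at most
`(m/η + 1)^{n+1} = (N^{m/(n+1)}/4 + 1)^{n+1} < N^m` cubes, so two distinct sequences share one.
-/

open Finset

lemma abs_sub_lt_of_natFloor_div_eq {η s t : ℝ} (hη : 0 < η) (hs : 0 ≤ s) (ht : 0 ≤ t)
    (h : ⌊s / η⌋₊ = ⌊t / η⌋₊) : |s - t| < η := by
  have hfloor : ⌊s / η⌋ = ⌊t / η⌋ := by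
    rw [← Int.natCast_floor_eq_floor (div_nonneg hs hη.le),
      ← Int.natCast_floor_eq_floor (div_nonneg ht hη.le), h]
  have := Int.abs_sub_lt_one_of_floor_eq_floor hfloor
  rwa [← sub_div, abs_div, abs_of_pos hη, div_lt_one hη] at this

theorem exists_ne_abs_sub_lt_of_pow_lt_card {ι κ : Type*} [Fintype κ] (s : Finset ι)
    (f : ι → κ → ℝ) {M η : ℝ} (hM : 0 ≤ M) (hη : 0 < η) (hf : ∀ x ∈ s, ∀ k, f x k ∈ Set.Icc 0 M)
    (hcard : (M / η + 1) ^ Fintype.card κ < #s) :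
    ∃ x ∈ s, ∃ y ∈ s, x ≠ y ∧ ∀ k, |f x k - f y k| < η := by
  classical
  let K := ⌊M / η⌋₊
  let cubes : Finset (κ → ℕ) := Fintype.piFinset fun _ => range (K + 1)
  have hmaps : ∀ x ∈ s, (fun k => ⌊f x k / η⌋₊) ∈ cubes := fun x hx => by
    simp only [cubes, Fintype.mem_piFinset, mem_range, Nat.lt_succ_iff]
    exact fun k => Nat.floor_le_floor (div_le_div_of_nonneg_right (hf x hx k).2 hη.le)
  have hcubes : #cubes < #s := by
    have hK : (K : ℝ) + 1 ≤ M / η + 1 := by gcongr; exact Nat.floor_le (by positivity)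
    have : ((#cubes : ℕ) : ℝ) < #s := by
      simp only [cubes, Fintype.card_piFinset, card_range, prod_const, card_univ]
      push_cast
      exact (pow_le_pow_left₀ (by positivity) hK _).trans_lt hcard
    exact_mod_cast this
  obtain ⟨x, hx, y, hy, hne, hxy⟩ := exists_ne_map_eq_of_card_lt_of_maps_to hcubes hmaps
  exact ⟨x, hx, y, hy, hne, fun k => abs_sub_lt_of_natFloor_div_eq hη (hf x hx k).1
    (hf y hy k).1 (congrFun hxy k)⟩

lemma sum_mem_Icc_zero_card {ι R : Type*} [Fintype ι] [Semiring R] [PartialOrder R]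
    [IsOrderedRing R] {g : ι → R} (hg : ∀ i, g i ∈ Set.Icc 0 1) :
    ∑ i, g i ∈ Set.Icc 0 (Fintype.card ι : R) :=
  ⟨sum_nonneg fun i _ => (hg i).1, by
    simpa using sum_le_card_nsmul univ g 1 fun i _ => (hg i).2⟩

/-- `Fin m` starts at `0`, so coordinate `j` lies in the paper's `G_{j+1}`. -/
noncomputable def gridPoint (m : ℕ) (Δ : ℝ) (q : Fin m → ℕ) : Fin m → ℝ :=
  fun j => (j : ℝ) / (2 * m) + q j * Δ

lemma gridPoint_injective {m : ℕ} {Δ : ℝ} (hΔ : Δ ≠ 0) : Function.Injective (gridPoint m Δ) :=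
  fun q q' h => funext fun j => by
    simpa [gridPoint, hΔ] using congrFun h j

theorem stmt3_general (m n : ℕ) (hm : 1 ≤ m)
    (ε : ℝ) (hε : 0 < ε)
    (Δ : ℝ) (hΔ : Δ = 4 * ε)
    (N : ℕ)
    (η : ℝ) (hηdef : η = 4 * m * (N : ℝ) ^ (-(m : ℝ) / ((n : ℝ) + 1)))
    (hbig : ((N : ℝ) ^ ((m : ℝ) / ((n : ℝ) + 1)) / 4 + 1) ^ (n + 1) < (N : ℝ) ^ m)
    (a : ℝ → Fin n → ℝ) (ha : ∀ x i, a x i ∈ Set.Icc (0:ℝ) 1)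
    (b : ℝ → ℝ) (hb : ∀ x, b x ∈ Set.Ioc (0:ℝ) 1) :
    ∃ z z' : Fin m → ℝ, z ≠ z' ∧
      (∀ j : Fin m, ∃ q ∈ Finset.Icc 1 N, z j = (j : ℝ) / (2 * m) + q * Δ) ∧
      (∀ j : Fin m, ∃ q ∈ Finset.Icc 1 N, z' j = (j : ℝ) / (2 * m) + q * Δ) ∧
      (∀ i, |(∑ j, a (z j) i) - ∑ j, a (z' j) i| ≤ η) ∧
      |(∑ j, b (z j)) - ∑ j, b (z' j)| ≤ η := by
  have hΔ0 : Δ ≠ 0 := by rw [hΔ]; positivity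
  have he : 0 < (m : ℝ) / ((n : ℝ) + 1) := by
    have : (0 : ℝ) < m := by exact_mod_cast hm
    positivity
  have hN : (0 : ℝ) < N := by
    rcases N.eq_zero_or_pos with rfl | hN
    · norm_num [Real.zero_rpow he.ne', zero_pow (by omega : m ≠ 0)] at hbig
    · exact_mod_cast hN
  have hη : 0 < η := by rw [hηdef]; positivity
  have hmη : (m : ℝ) / η = (N : ℝ) ^ ((m : ℝ) / ((n : ℝ) + 1)) / 4 := by
    rw [hηdef, neg_div, Real.rpow_neg hN.le]
    field_simp
  -- `none` indexes the `b`-sum, `some i` the `i`-th coordinate of the `a`-sum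
  let sums : (Fin m → ℕ) → Option (Fin n) → ℝ := fun q k =>
    k.elim (∑ j, b (gridPoint m Δ q j)) fun i => ∑ j, a (gridPoint m Δ q j) i
  have hsums : ∀ q ∈ Fintype.piFinset fun _ : Fin m => Icc 1 N, ∀ k, sums q k ∈ Set.Icc 0 (m : ℝ) := by
    rintro q - (_ | i)
    · simpa [sums] using
        sum_mem_Icc_zero_card fun j => Set.Ioc_subset_Icc_self (hb (gridPoint m Δ q j))
    · simpa [sums] using sum_mem_Icc_zero_card fun j => ha (gridPoint m Δ q j) i
  obtain ⟨q, hq, q', hq', hne, hclose⟩ := exists_ne_abs_sub_lt_of_pow_lt_card _ sums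
    (by positivity) hη hsums (by simpa [hmη] using hbig)
  rw [Fintype.mem_piFinset] at hq hq'
  exact ⟨_, _, (gridPoint_injective hΔ0).ne hne, fun j => ⟨q j, hq j, rfl⟩,
    fun j => ⟨q' j, hq' j, rfl⟩, fun i => (hclose (some i)).le, (hclose none).le⟩

/-- Pigeonhole over grid sequences: among the `N^m` grid sequences there exist two
distinct ones whose `a`-sums are `η`-close in sup norm and whose `b`-sums are
`η`-close. -/
theorem stmt3 (m n : ℕ) (hm : 1 ≤ m) (hn : 1 ≤ n)
    (ε : ℝ) (hε : 0 < ε) (hε' : ε < 1 / (64 * m))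
    (Δ : ℝ) (hΔ : Δ = 4 * ε)
    (N : ℕ) (hN : N = ⌊1 / (16 * m * ε)⌋₊)
    (η : ℝ) (hηdef : η = 4 * m * (N : ℝ) ^ (-(m : ℝ) / ((n : ℝ) + 1)))
    (hbig : ((N : ℝ) ^ ((m : ℝ) / ((n : ℝ) + 1)) / 4 + 1) ^ (n + 1) < (N : ℝ) ^ m)
    (a : ℝ → Fin n → ℝ) (ha : ∀ x i, a x i ∈ Set.Icc (0:ℝ) 1)
    (b : ℝ → ℝ) (hb : ∀ x, b x ∈ Set.Ioc (0:ℝ) 1) :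
    ∃ z z' : Fin m → ℝ, z ≠ z' ∧
      (∀ j : Fin m, ∃ q ∈ Finset.Icc 1 N, z j = (j : ℝ) / (2 * m) + q * Δ) ∧
      (∀ j : Fin m, ∃ q ∈ Finset.Icc 1 N, z' j = (j : ℝ) / (2 * m) + q * Δ) ∧
      (∀ i, |(∑ j, a (z j) i) - ∑ j, a (z' j) i| ≤ η) ∧
      |(∑ j, b (z j)) - ∑ j, b (z' j)| ≤ η :=
  stmt3_general m n hm ε hε Δ hΔ N η hηdef hbig a ha b hb
end

section
/- Let H(x) = 1 if x ≥ 0 and H(x) = 0 otherwise. Let a < 0 < b and let μ be a finite positive measure on [a, b], and fix p ≥ 1 and δ > 0. Then there exist real numbers A, B, C, D such that the function x ↦ A·tanh(Bx + C) + D satisfies ‖H - (A·tanh(B·+C) + D)‖_{L^p(μ)} < δ. -/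
open MeasureTheory Filter Topology
open scoped ENNReal

/-!
Since `(1 + tanh y) / 2 = sigmoid (2y)`, the approximants with `B = n²`, `C = n` are
`sigmoid (2n(nx + 1))`, which tend to `H x` at every point: to `1` for `x ≥ 0` (the shift `C = n`
takes care of the atom at `0`) and to `0` for `x < 0`. These functions are bounded by `1`, so on
a finite measure dominated convergence turns pointwise convergence into `L^p` convergence.
-/

theorem tendsto_eLpNorm_zero_of_tendsto_ae_of_bound {α E : Type*} [MeasurableSpace α]
    [NormedAddCommGroup E] {μ : Measure α} [IsFiniteMeasure μ] {p : ℝ≥0∞} (hp : p ≠ ∞)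
    {F : ℕ → α → E} (C : ℝ) (hF : ∀ n, AEStronglyMeasurable (F n) μ)
    (h_bound : ∀ n, ∀ᵐ x ∂μ, ‖F n x‖ ≤ C)
    (h_lim : ∀ᵐ x ∂μ, Tendsto (fun n => F n x) atTop (𝓝 0)) :
    Tendsto (fun n => eLpNorm (F n) p μ) atTop (𝓝 0) := by
  rcases eq_or_ne p 0 with rfl | hp0
  · simp
  have hp_pos : 0 < p.toReal := ENNReal.toReal_pos hp0 hp
  simp_rw [eLpNorm_eq_lintegral_rpow_enorm_toReal hp0 hp]
  have h_int : Tendsto (fun n => ∫⁻ x, ‖F n x‖ₑ ^ p.toReal ∂μ) atTop (𝓝 (∫⁻ _, 0 ∂μ)) := by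
    refine tendsto_lintegral_of_dominated_convergence' (fun _ => ‖C‖ₑ ^ p.toReal)
      (fun n => (hF n).enorm.pow_const _) (fun n => ?_) ?_ ?_
    · filter_upwards [h_bound n] with x hx
      gcongr
      exact enorm_le_iff_norm_le.mpr (hx.trans (le_abs_self C))
    · simpa [lintegral_const] using
        ENNReal.mul_ne_top (by simp [hp_pos.le]) (measure_ne_top μ _)
    · filter_upwards [h_lim] with x hx
      simpa [Function.comp_def, hp_pos] using
        ((ENNReal.continuous_rpow_const (y := p.toReal)).tendsto 0).comp (by simpa using hx.enorm)
  simpa [Function.comp_def, hp_pos] using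
    ((ENNReal.continuous_rpow_const (y := 1 / p.toReal)).tendsto _).comp h_int

noncomputable def heaviside (x : ℝ) : ℝ := if 0 ≤ x then 1 else 0

lemma measurable_heaviside : Measurable heaviside :=
  measurable_const.ite (measurableSet_le measurable_const measurable_id) measurable_const

lemma Real.half_mul_tanh_add_half (y : ℝ) :
    1 / 2 * Real.tanh y + 1 / 2 = Real.sigmoid (2 * y) := by
  have hpos : 0 < Real.exp y + Real.exp (-y) := by positivity
  have hexp : Real.exp (-(2 * y)) = Real.exp (-y) / Real.exp y := by
    rw [← Real.exp_sub]; ring_nf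
  rw [Real.tanh_eq_sinh_div_cosh, Real.sinh_eq, Real.cosh_eq, Real.sigmoid_def, hexp]
  field_simp
  ring

lemma tendsto_sq_mul_add_atTop {x : ℝ} (hx : 0 ≤ x) :
    Tendsto (fun n : ℕ => (n : ℝ) ^ 2 * x + n) atTop atTop :=
  tendsto_atTop_mono (fun n => le_add_of_nonneg_left (by positivity)) tendsto_natCast_atTop_atTop

lemma tendsto_sq_mul_add_atBot {x : ℝ} (hx : x < 0) :
    Tendsto (fun n : ℕ => (n : ℝ) ^ 2 * x + n) atTop atBot := by
  have h : Tendsto (fun n : ℕ => (n : ℝ) * x + 1) atTop atBot :=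
    tendsto_atBot_add_const_right _ _ (tendsto_natCast_atTop_atTop.atTop_mul_const_of_neg hx)
  refine (tendsto_natCast_atTop_atTop.atTop_mul_atBot₀ h).congr fun n => ?_
  ring

lemma tendsto_sigmoid_heaviside (x : ℝ) :
    Tendsto (fun n : ℕ => Real.sigmoid (2 * ((n : ℝ) ^ 2 * x + n))) atTop (𝓝 (heaviside x)) := by
  unfold heaviside
  split_ifs with hx
  · exact Real.tendsto_sigmoid_atTop.comp ((tendsto_sq_mul_add_atTop hx).const_mul_atTop two_pos)
  · exact Real.tendsto_sigmoid_atBot.comp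
      ((tendsto_sq_mul_add_atBot (not_le.mp hx)).const_mul_atBot two_pos)

lemma abs_heaviside_sub_sigmoid_le_one (x y : ℝ) : |heaviside x - Real.sigmoid y| ≤ 1 := by
  have h0 : 0 ≤ heaviside x := by unfold heaviside; split_ifs <;> norm_num
  have h1 : heaviside x ≤ 1 := by unfold heaviside; split_ifs <;> norm_num
  rw [abs_le]
  constructor <;> linarith [Real.sigmoid_nonneg y, Real.sigmoid_le_one y]

theorem stmt5_general (μ : Measure ℝ) [IsFiniteMeasure μ] (p : ℝ) (δ : ℝ) (hδ : 0 < δ) :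
    ∃ A B C D : ℝ,
      eLpNorm (fun x => (if 0 ≤ x then (1:ℝ) else 0)
          - (A * Real.tanh (B * x + C) + D)) (ENNReal.ofReal p) μ
        < ENNReal.ofReal δ := by
  have h_lim : Tendsto (fun n : ℕ => eLpNorm (fun x => heaviside x -
      Real.sigmoid (2 * ((n : ℝ) ^ 2 * x + n))) (ENNReal.ofReal p) μ) atTop (𝓝 0) := by
    refine tendsto_eLpNorm_zero_of_tendsto_ae_of_bound ENNReal.ofReal_ne_top 1
      (fun n => ?_) (fun n => ae_of_all _ fun x => abs_heaviside_sub_sigmoid_le_one _ _)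
      (ae_of_all _ fun x => by simpa using (tendsto_sigmoid_heaviside x).const_sub (heaviside x))
    exact (measurable_heaviside.sub (Continuous.measurable (by fun_prop))).aestronglyMeasurable
  obtain ⟨n, hn⟩ := (h_lim.eventually (eventually_lt_nhds (ENNReal.ofReal_pos.mpr hδ))).exists
  refine ⟨1 / 2, (n : ℝ) ^ 2, n, 1 / 2, ?_⟩
  simp_rw [Real.half_mul_tanh_add_half]
  exact hn

/-- The Heaviside function can be approximated in `L^p(μ)` by `A·tanh(Bx+C)+D`
for any finite measure `μ` on `[a,b]` with `a < 0 < b`. -/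
theorem stmt5 (a b : ℝ) (ha : a < 0) (hb : 0 < b)
    (μ : Measure ℝ) [IsFiniteMeasure μ] (hμ : μ (Set.Icc a b)ᶜ = 0)
    (p : ℝ) (hp : 1 ≤ p) (δ : ℝ) (hδ : 0 < δ) :
    ∃ A B C D : ℝ,
      eLpNorm (fun x => (if 0 ≤ x then (1:ℝ) else 0)
          - (A * Real.tanh (B * x + C) + D)) (ENNReal.ofReal p) μ
        < ENNReal.ofReal δ :=
  stmt5_general μ p δ hδ
end
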